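/- arXiv:2404.13233 — 7 statements merged into one kernel-verified Lean document; each statement's English description precedes it below -/
import Mathlib

section
/- For every vertex v_k of an undirected connected graph with nonnegative vertex multiplicities summing to a positive value, the L1 centrality C(v_k) = 1 - max_{j≠k} (max(0, Σ_i η_i (d(v_k,v_i) - d(v_j,v_i)) / (η_· d(v_j,v_k)))) satisfies 0 ≤ C(v_k) ≤ 1. -/
/-!
By symmetry and the triangle inequality, `d(k,i) - d(j,i) ≤ d(j,k)` for every `i`, so each quotient in the
definition of `L1Cent` is at most `1`; after truncation at `0` it lies in `[0, 1]`, hence so does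
the supremum (also for an empty index set, where `sSup ∅ = 0`).
-/

open Finset

/-- The `L₁` centrality of vertex `k` in a graph with geodesic distance `d` and
vertex multiplicities `η`. -/
noncomputable def L1Cent {n : ℕ} (d : Fin n → Fin n → ℝ) (η : Fin n → ℝ) (k : Fin n) : ℝ :=
  1 - sSup ((fun j => max 0 ((∑ i, η i * (d k i - d j i)) / ((∑ i, η i) * d j k))) ''
      {j | j ≠ k})

theorem sum_mul_sub_le_sum_mul {ι : Type*} [Fintype ι] (d : ι → ι → ℝ)
    (hsymm : ∀ i j, d i j = d j i) (htri : ∀ i j l, d i l ≤ d i j + d j l)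
    (η : ι → ℝ) (hη : ∀ i, 0 ≤ η i) (j k : ι) :
    ∑ i, η i * (d k i - d j i) ≤ (∑ i, η i) * d j k := by
  rw [sum_mul]
  refine sum_le_sum fun i _ => mul_le_mul_of_nonneg_left ?_ (hη i)
  linarith [htri k j i, hsymm k j]

theorem max_zero_div_sum_mul_le_one {ι : Type*} [Fintype ι] (d : ι → ι → ℝ)
    (hsymm : ∀ i j, d i j = d j i) (htri : ∀ i j l, d i l ≤ d i j + d j l)
    (η : ι → ℝ) (hη : ∀ i, 0 ≤ η i) {j k : ι} (hjk : 0 ≤ d j k) :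
    max 0 ((∑ i, η i * (d k i - d j i)) / ((∑ i, η i) * d j k)) ≤ 1 :=
  max_le zero_le_one <| div_le_one_of_le₀ (sum_mul_sub_le_sum_mul d hsymm htri η hη j k)
    (mul_nonneg (sum_nonneg fun i _ => hη i) hjk)

theorem l1cent_mem_Icc_general {n : ℕ} (d : Fin n → Fin n → ℝ)
    (hsymm : ∀ i j, d i j = d j i)
    (hpos : ∀ i j, i ≠ j → 0 < d i j)
    (htri : ∀ i j l, d i l ≤ d i j + d j l)
    (η : Fin n → ℝ) (hη : ∀ i, 0 ≤ η i)
    (k : Fin n) : 0 ≤ L1Cent d η k ∧ L1Cent d η k ≤ 1 := by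
  unfold L1Cent
  constructor
  · refine sub_nonneg.2 (Real.sSup_le ?_ zero_le_one)
    rintro _ ⟨j, hj, rfl⟩
    exact max_zero_div_sum_mul_le_one d hsymm htri η hη (hpos j k hj).le
  · refine sub_le_self _ (Real.sSup_nonneg ?_)
    rintro _ ⟨j, -, rfl⟩
    exact le_max_left _ _

theorem l1cent_mem_Icc {n : ℕ} (hn : 2 ≤ n) (d : Fin n → Fin n → ℝ)
    (hsymm : ∀ i j, d i j = d j i)
    (hzero : ∀ i, d i i = 0)
    (hpos : ∀ i j, i ≠ j → 0 < d i j)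
    (htri : ∀ i j l, d i l ≤ d i j + d j l)
    (η : Fin n → ℝ) (hη : ∀ i, 0 ≤ η i) (hsum : 0 < ∑ i, η i)
    (k : Fin n) : 0 ≤ L1Cent d η k ∧ L1Cent d η k ≤ 1 :=
  l1cent_mem_Icc_general d hsymm hpos htri η hη k
end

section
/- If a vertex v_i has multiplicity satisfying η_i / η_· ≥ 1/2, then v_i is a graph median, and hence C(v_i) = 1. -/
open Finset

/-!
Moving the candidate median from `vᵢ` to another vertex `v` changes the distance to `vᵢ` by
`+d(v, vᵢ)` and, by the triangle inequality, the distance to every other `vⱼ` by at least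
`-d(v, vᵢ)`. Hence the total cost changes by at least `(2 ηᵢ - η.) d(v, vᵢ) ≥ 0`. At a median every
numerator in the definition of `L1Cent` is nonpositive, so the supremum vanishes.
-/

section WeightedMedian

variable {ι : Type*}

theorem nonneg_of_triangle {d : ι → ι → ℝ} (hsymm : ∀ i j, d i j = d j i)
    (hzero : ∀ i, d i i = 0) (htri : ∀ i j l, d i l ≤ d i j + d j l) (i j : ι) :
    0 ≤ d i j := by
  have h := htri i j i
  rw [hzero, hsymm j i] at h
  linarith

variable [Fintype ι]

def IsMedian (d : ι → ι → ℝ) (η : ι → ℝ) (m : ι) : Prop :=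
  ∀ v, ∑ j, η j * d m j ≤ ∑ j, η j * d v j

theorem isMedian_of_sum_le_two_mul {d : ι → ι → ℝ} (hsymm : ∀ i j, d i j = d j i)
    (hzero : ∀ i, d i i = 0) (htri : ∀ i j l, d i l ≤ d i j + d j l)
    {η : ι → ℝ} (hη : ∀ j, 0 ≤ η j) {i : ι} (hi : ∑ j, η j ≤ 2 * η i) :
    IsMedian d η i := by
  classical
  intro v
  have hterm : ∀ j, η j * (d i j - d v j) ≤ η j * d v i := fun j =>
    mul_le_mul_of_nonneg_left (by linarith [htri i v j, hsymm i v]) (hη j)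
  have hrest : ∑ j ∈ univ.erase i, η j * (d i j - d v j) ≤ (∑ j, η j - η i) * d v i := by
    rw [← sum_erase_eq_sub (mem_univ i), sum_mul]
    exact sum_le_sum fun j _ => hterm j
  have hgain : 0 ≤ (2 * η i - ∑ j, η j) * d v i :=
    mul_nonneg (by linarith) (nonneg_of_triangle hsymm hzero htri v i)
  have hdiff : ∑ j, η j * (d i j - d v j) ≤ 0 := by
    rw [← add_sum_erase _ _ (mem_univ i), hzero]
    linarith
  simpa only [mul_sub, sum_sub_distrib, sub_nonpos] using hdiff

end WeightedMedian

theorem le_two_mul_of_half_le_div {a s : ℝ} (ha : 0 ≤ a) (h : 1 / 2 ≤ a / s) : s ≤ 2 * a := by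
  rcases le_or_gt s 0 with hs | hs
  · linarith
  · rw [le_div_iff₀ hs] at h
    linarith

theorem L1Cent_eq_one_of_isMedian {n : ℕ} {d : Fin n → Fin n → ℝ} (hd : ∀ i j, 0 ≤ d i j)
    {η : Fin n → ℝ} (hη : 0 ≤ ∑ j, η j) {k : Fin n} (hk : IsMedian d η k) :
    L1Cent d η k = 1 := by
  suffices h : sSup ((fun j => max 0 ((∑ i, η i * (d k i - d j i)) / ((∑ i, η i) * d j k))) ''
      {j | j ≠ k}) = 0 by
    rw [L1Cent, h, sub_zero]
  -- Both bounds also hold for the empty image (`n ≤ 1`), where `sSup ∅ = 0`.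
  refine le_antisymm (Real.sSup_nonpos ?_) (Real.sSup_nonneg ?_)
  · rintro _ ⟨j, -, rfl⟩
    have hnum : ∑ i, η i * (d k i - d j i) ≤ 0 := by
      simpa only [mul_sub, sum_sub_distrib, sub_nonpos] using hk j
    exact max_le le_rfl (div_nonpos_of_nonpos_of_nonneg hnum (mul_nonneg hη (hd j k)))
  · rintro _ ⟨j, -, rfl⟩
    exact le_max_left _ _

theorem median_of_half_multiplicity_general {n : ℕ} (d : Fin n → Fin n → ℝ)
    (hsymm : ∀ i j, d i j = d j i)
    (hzero : ∀ i, d i i = 0)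
    (htri : ∀ i j l, d i l ≤ d i j + d j l)
    (η : Fin n → ℝ) (hη : ∀ i, 0 ≤ η i)
    (i : Fin n) (hi : 1 / 2 ≤ η i / ∑ j, η j) :
    (∀ v, ∑ j, η j * d i j ≤ ∑ j, η j * d v j) ∧ L1Cent d η i = 1 := by
  have hmed : IsMedian d η i :=
    isMedian_of_sum_le_two_mul hsymm hzero htri hη (le_two_mul_of_half_le_div (hη i) hi)
  exact ⟨hmed, L1Cent_eq_one_of_isMedian (nonneg_of_triangle hsymm hzero htri)
    (sum_nonneg fun j _ => hη j) hmed⟩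

/-- A vertex carrying at least half of the total multiplicity is a graph median,
and hence has L1 centrality 1. -/
theorem median_of_half_multiplicity {n : ℕ} (hn : 2 ≤ n) (d : Fin n → Fin n → ℝ)
    (hsymm : ∀ i j, d i j = d j i)
    (hzero : ∀ i, d i i = 0)
    (hpos : ∀ i j, i ≠ j → 0 < d i j)
    (htri : ∀ i j l, d i l ≤ d i j + d j l)
    (η : Fin n → ℝ) (hη : ∀ i, 0 ≤ η i) (hsum : 0 < ∑ j, η j)
    (i : Fin n) (hi : 1 / 2 ≤ η i / ∑ j, η j) :
    (∀ v, ∑ j, η j * d i j ≤ ∑ j, η j * d v j) ∧ L1Cent d η i = 1 :=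
  median_of_half_multiplicity_general d hsymm hzero htri η hη i hi
end

section
/- If a vertex v_i has multiplicity with η_i / η_· > 1/2, then v_i is the unique vertex whose L1 centrality equals 1; in particular, for every i' ≠ i, C(v_{i'}) ≤ 1 - (2η_i - η_·)/η_· < 1. -/
open Finset

/-!
Write `S = Σ η`. By the triangle inequality each term of `Σ_l η_l (d(k,l) - d(j,l))` is at most
`η_l d(k,j)`, while the term `l = k` equals `-η_k d(k,j)`; hence the sum is at most
`(S - 2η_k) d(k,j)`. For the majority vertex `i` this bound is negative, so every ratio in the
supremum defining `C(v_i)` is `≤ 0` and `C(v_i) = 1`. Swapping the roles of the two vertices, the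
ratio of any `i' ≠ i` against `j = i` is at least `(2η_i - S)/S > 0`, which bounds `C(v_i')`.
-/

section WeightedGap

variable {ι : Type*} [Fintype ι] [DecidableEq ι] {d : ι → ι → ℝ} {η : ι → ℝ}

theorem sum_mul_sub_add_two_mul_le (hsymm : ∀ i j, d i j = d j i) (hzero : ∀ i, d i i = 0)
    (htri : ∀ i j l, d i l ≤ d i j + d j l) (hη : ∀ i, 0 ≤ η i) (k j : ι) :
    ∑ l, η l * (d k l - d j l) + 2 * η k * d k j ≤ (∑ l, η l) * d k j := by
  have hrest : ∑ l ∈ univ.erase k, η l * (d k l - d j l) ≤ ∑ l ∈ univ.erase k, η l * d k j :=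
    sum_le_sum fun l _ => mul_le_mul_of_nonneg_left (by linarith [htri k j l]) (hη l)
  rw [← add_sum_erase _ _ (mem_univ k), ← add_sum_erase univ η (mem_univ k), hzero,
    hsymm j k, add_mul, sum_mul]
  linarith

theorem two_mul_sub_mul_le_sum_mul_sub (hsymm : ∀ i j, d i j = d j i) (hzero : ∀ i, d i i = 0)
    (htri : ∀ i j l, d i l ≤ d i j + d j l) (hη : ∀ i, 0 ≤ η i) (k j : ι) :
    (2 * η j - ∑ l, η l) * d j k ≤ ∑ l, η l * (d k l - d j l) := by
  have h := sum_mul_sub_add_two_mul_le hsymm hzero htri hη j k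
  have hneg : ∑ l, η l * (d k l - d j l) = -∑ l, η l * (d j l - d k l) := by
    rw [← sum_neg_distrib]
    exact sum_congr rfl fun l _ => by ring
  rw [hneg]
  linarith

end WeightedGap

theorem L1Cent_eq_one {n : ℕ} (hn : 2 ≤ n) {d : Fin n → Fin n → ℝ} {η : Fin n → ℝ} {k : Fin n}
    (h : ∀ j, j ≠ k → (∑ l, η l * (d k l - d j l)) / ((∑ l, η l) * d j k) ≤ 0) :
    L1Cent d η k = 1 := by
  obtain ⟨j₀, hj₀⟩ := Fintype.exists_ne_of_one_lt_card (by rw [Fintype.card_fin]; omega) k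
  have hset : ((fun j => max 0 ((∑ l, η l * (d k l - d j l)) / ((∑ l, η l) * d j k))) ''
      {j | j ≠ k}) = {0} :=
    Set.eq_singleton_iff_unique_mem.mpr
      ⟨⟨j₀, hj₀, max_eq_left (h j₀ hj₀)⟩, by rintro x ⟨j, hj, rfl⟩; exact max_eq_left (h j hj)⟩
  rw [L1Cent, hset, csSup_singleton, sub_zero]

theorem L1Cent_le_one_sub {n : ℕ} (d : Fin n → Fin n → ℝ) (η : Fin n → ℝ) {k j : Fin n}
    (hj : j ≠ k) :
    L1Cent d η k ≤ 1 - (∑ l, η l * (d k l - d j l)) / ((∑ l, η l) * d j k) := by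
  have hsup := le_csSup (Set.toFinite _).bddAbove
    (Set.mem_image_of_mem (fun j => max 0 ((∑ l, η l * (d k l - d j l)) / ((∑ l, η l) * d j k)))
      (show j ∈ {j | j ≠ k} from hj))
  rw [L1Cent]
  linarith [le_max_right 0 ((∑ l, η l * (d k l - d j l)) / ((∑ l, η l) * d j k))]

/-- A vertex carrying more than half of the total multiplicity is the unique
vertex with L1 centrality 1; any other vertex satisfies
`C(v_i') ≤ 1 - (2η_i - η_·)/η_· < 1`. -/
theorem unique_max_of_majority_multiplicity {n : ℕ} (hn : 2 ≤ n) (d : Fin n → Fin n → ℝ)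
    (hsymm : ∀ i j, d i j = d j i)
    (hzero : ∀ i, d i i = 0)
    (hpos : ∀ i j, i ≠ j → 0 < d i j)
    (htri : ∀ i j l, d i l ≤ d i j + d j l)
    (η : Fin n → ℝ) (hη : ∀ i, 0 ≤ η i) (hsum : 0 < ∑ j, η j)
    (i : Fin n) (hi : 1 / 2 < η i / ∑ j, η j) :
    L1Cent d η i = 1 ∧ (∀ k, L1Cent d η k = 1 → k = i) ∧
      ∀ i', i' ≠ i →
        L1Cent d η i' ≤ 1 - (2 * η i - ∑ j, η j) / ∑ j, η j ∧ L1Cent d η i' < 1 := by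
  have hmaj : 0 < 2 * η i - ∑ j, η j := by
    rw [div_lt_div_iff₀ two_pos hsum] at hi
    linarith
  have hone : L1Cent d η i = 1 := L1Cent_eq_one hn fun j hj =>
    div_nonpos_of_nonpos_of_nonneg
      (by nlinarith [sum_mul_sub_add_two_mul_le hsymm hzero htri hη i j, hpos i j hj.symm])
      (mul_nonneg hsum.le (hpos j i hj).le)
  have hbound : ∀ i', i' ≠ i → L1Cent d η i' ≤ 1 - (2 * η i - ∑ j, η j) / ∑ j, η j := by
    intro i' hi'
    have hd := hpos i i' hi'.symm
    refine (L1Cent_le_one_sub d η hi'.symm).trans (sub_le_sub_left ?_ 1)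
    rw [← mul_div_mul_right _ _ hd.ne']
    exact div_le_div_of_nonneg_right
      (two_mul_sub_mul_le_sum_mul_sub hsymm hzero htri hη i' i) (by positivity)
  have hlt : ∀ i', i' ≠ i → L1Cent d η i' < 1 := fun i' hi' =>
    (hbound i' hi').trans_lt (sub_lt_self 1 (div_pos hmaj hsum))
  exact ⟨hone, fun k hk => by_contra fun hki => (hlt k hki).ne hk,
    fun i' hi' => ⟨hbound i' hi', hlt i' hi'⟩⟩
end

section
/- For every vertex v_i, the L1 centrality satisfies the lower bound C(v_i) ≥ min{2η_i/η_·, 1}. -/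
/-
The ratio in `L1Cent d η i` at `j ≠ i` is at most `1 - 2 η_i / η_·`: by the triangle inequality every
summand `η_l (d i l - d j l)` is at most `η_l d(j, i)`, while the summand at `l = i` equals
`-η_i d(j, i)`, so the numerator is at most `(η_· - 2 η_i) d(j, i)`. Taking positive parts and the
supremum, `1 - sSup ≥ 1 - max 0 (1 - 2 η_i / η_·) = min (2 η_i / η_·) 1`.
-/

open Finset

lemma min_le_one_sub_sSup_max_zero {ι : Type*} (s : Set ι) (g : ι → ℝ) (c : ℝ)
    (hg : ∀ j ∈ s, g j ≤ 1 - c) :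
    min c 1 ≤ 1 - sSup ((fun j => max 0 (g j)) '' s) := by
  have hsSup : sSup ((fun j => max 0 (g j)) '' s) ≤ max 0 (1 - c) := by
    refine Real.sSup_le ?_ (le_max_left _ _)
    rintro _ ⟨j, hj, rfl⟩
    exact max_le_max le_rfl (hg j hj)
  have hmin : 1 - max 0 (1 - c) = min c 1 := by
    rw [← min_sub_sub_left, sub_zero, sub_sub_cancel, min_comm]
  linarith

section Weighted

variable {n : ℕ} {d : Fin n → Fin n → ℝ} {η : Fin n → ℝ}

lemma sum_mul_dist_sub_dist_le (hsymm : ∀ i j, d i j = d j i) (hzero : ∀ i, d i i = 0)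
    (htri : ∀ i j l, d i l ≤ d i j + d j l) (hη : ∀ i, 0 ≤ η i) (i j : Fin n) :
    ∑ l, η l * (d i l - d j l) ≤ (∑ l, η l - 2 * η i) * d j i := by
  have hterm : ∀ l ∈ univ.erase i, η l * (d i l - d j l) ≤ η l * d j i := fun l _ =>
    mul_le_mul_of_nonneg_left (by linarith [htri i j l, hsymm i j]) (hη l)
  calc ∑ l, η l * (d i l - d j l)
      = η i * (d i i - d j i) + ∑ l ∈ univ.erase i, η l * (d i l - d j l) :=
        (add_sum_erase _ _ (mem_univ i)).symm
    _ ≤ η i * (0 - d j i) + ∑ l ∈ univ.erase i, η l * d j i := by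
        rw [hzero]; exact add_le_add_right (sum_le_sum hterm) _
    _ = (∑ l, η l - 2 * η i) * d j i := by
        rw [← sum_mul, sum_erase_eq_sub (mem_univ i)]; ring

lemma L1Cent_ratio_le (hsymm : ∀ i j, d i j = d j i) (hzero : ∀ i, d i i = 0)
    (hpos : ∀ i j, i ≠ j → 0 < d i j) (htri : ∀ i j l, d i l ≤ d i j + d j l)
    (hη : ∀ i, 0 ≤ η i) (hsum : 0 < ∑ j, η j) {i j : Fin n} (hji : j ≠ i) :
    (∑ l, η l * (d i l - d j l)) / ((∑ l, η l) * d j i) ≤ 1 - 2 * η i / ∑ l, η l := by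
  rw [div_le_iff₀ (mul_pos hsum (hpos j i hji))]
  calc ∑ l, η l * (d i l - d j l) ≤ (∑ l, η l - 2 * η i) * d j i :=
        sum_mul_dist_sub_dist_le hsymm hzero htri hη i j
    _ = (1 - 2 * η i / ∑ l, η l) * ((∑ l, η l) * d j i) := by
        field_simp

end Weighted

theorem l1cent_lower_bound_general {n : ℕ} (d : Fin n → Fin n → ℝ)
    (hsymm : ∀ i j, d i j = d j i)
    (hzero : ∀ i, d i i = 0)
    (hpos : ∀ i j, i ≠ j → 0 < d i j)
    (htri : ∀ i j l, d i l ≤ d i j + d j l)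
    (η : Fin n → ℝ) (hη : ∀ i, 0 ≤ η i) (hsum : 0 < ∑ j, η j)
    (i : Fin n) :
    min (2 * η i / ∑ j, η j) 1 ≤ L1Cent d η i :=
  min_le_one_sub_sSup_max_zero _ _ _ fun _ hj =>
    L1Cent_ratio_le hsymm hzero hpos htri hη hsum hj

/-- Lower bound: `C(v_i) ≥ min {2η_i/η_·, 1}`. -/
theorem l1cent_lower_bound {n : ℕ} (hn : 2 ≤ n) (d : Fin n → Fin n → ℝ)
    (hsymm : ∀ i j, d i j = d j i)
    (hzero : ∀ i, d i i = 0)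
    (hpos : ∀ i j, i ≠ j → 0 < d i j)
    (htri : ∀ i j l, d i l ≤ d i j + d j l)
    (η : Fin n → ℝ) (hη : ∀ i, 0 ≤ η i) (hsum : 0 < ∑ j, η j)
    (i : Fin n) :
    min (2 * η i / ∑ j, η j) 1 ≤ L1Cent d η i :=
  l1cent_lower_bound_general d hsymm hzero hpos htri η hη hsum i
end

section
/- Minimum at infinity: Suppose the distances from vertex v_1 are given by a family d_t with d_t(v_1,w) → ∞ as t → ∞ for all w ≠ v_1, d_t(v_1,w)/d_t(v_1,w') → 1 for all w, w' ≠ v_1, and distances among v_2,...,v_n fixed and finite. Then the L1 centrality of v_1 computed with d_t converges, as t → ∞, to min{2η_1/η_·, 1}. -/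
/-!
For `j ≠ v₁`, divide numerator and denominator of the `j`-th quotient in `L1Cent` by
`d_t(j, v₁)`. The `i`-th summand `η_i (d_t(v₁,i) - d_t(j,i)) / d_t(j,v₁)` equals `-η₁` for
`i = v₁`, and tends to `η_i` for `i ≠ v₁`, since `d_t(j,i)` stays fixed while
`d_t(v₁,i) / d_t(v₁,j) → 1`. Hence every quotient, and so their finite maximum, tends to
`1 - 2η₁/η_·`, and `1 - max(0, 1 - x) = min(x, 1)`.
-/

open Finset

open Filter Topology

lemma L1Cent_eq_sup' {n : ℕ} (d : Fin n → Fin n → ℝ) (η : Fin n → ℝ) (k : Fin n)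
    (hne : (univ.erase k).Nonempty) :
    L1Cent d η k = 1 - (univ.erase k).sup' hne
      (fun j => max 0 ((∑ i, η i * (d k i - d j i)) / ((∑ i, η i) * d j k))) := by
  rw [L1Cent, sup'_eq_csSup_image, coe_erase, coe_univ, ← Set.compl_eq_univ_sdiff]
  rfl

lemma one_sub_max_zero_one_sub (x : ℝ) : 1 - max 0 (1 - x) = min x 1 := by
  rw [← min_sub_sub_left, sub_zero, sub_sub_cancel, min_comm]

lemma tendsto_sub_const_div_of_tendsto_div {α : Type*} {l : Filter α} {a b : α → ℝ} (c : ℝ)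
    (ha : Tendsto a l atTop) (hba : Tendsto (fun t => b t / a t) l (𝓝 1)) :
    Tendsto (fun t => (b t - c) / a t) l (𝓝 1) := by
  have h := hba.sub (ha.inv_tendsto_atTop.const_mul c)
  simp only [mul_zero, sub_zero] at h
  simpa only [sub_div, div_eq_mul_inv, Pi.inv_apply, sub_mul] using h

lemma sum_mul_ite_eq_sub {ι : Type*} [Fintype ι] [DecidableEq ι] (η : ι → ℝ) (v : ι) :
    ∑ i, η i * (if i = v then -1 else 1) = ∑ i, η i - 2 * η v := by
  have : ∀ i, η i * (if i = v then -1 else 1) = η i - if i = v then 2 * η i else 0 := by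
    intro i; split_ifs <;> ring
  simp [this, sum_sub_distrib]

section MovingVertex

variable {n : ℕ} {d : ℕ → Fin n → Fin n → ℝ} {v : Fin n}

lemma tendsto_dist_sub_dist_div_dist (hfix : ∀ t i j, i ≠ v → j ≠ v → d t i j = d 0 i j)
    (hinf : ∀ w, w ≠ v → Tendsto (fun t => d t v w) atTop atTop)
    (hratio : ∀ w w', w ≠ v → w' ≠ v → Tendsto (fun t => d t v w / d t v w') atTop (𝓝 1))
    {i j : Fin n} (hi : i ≠ v) (hj : j ≠ v) :
    Tendsto (fun t => (d t v i - d t j i) / d t v j) atTop (𝓝 1) := by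
  simp only [hfix _ j i hj hi]
  exact tendsto_sub_const_div_of_tendsto_div _ (hinf j hj) (hratio i j hi hj)

lemma tendsto_weighted_dist_sub_dist_div_dist (hsymm : ∀ t i j, d t i j = d t j i)
    (hzero : ∀ t i, d t i i = 0) (hfix : ∀ t i j, i ≠ v → j ≠ v → d t i j = d 0 i j)
    (hinf : ∀ w, w ≠ v → Tendsto (fun t => d t v w) atTop atTop)
    (hratio : ∀ w w', w ≠ v → w' ≠ v → Tendsto (fun t => d t v w / d t v w') atTop (𝓝 1))
    (η : Fin n → ℝ) {j : Fin n} (hj : j ≠ v) :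
    Tendsto (fun t => (∑ i, η i * (d t v i - d t j i)) / d t j v) atTop
      (𝓝 (∑ i, η i - 2 * η v)) := by
  have hterm : ∀ i, Tendsto (fun t => (d t v i - d t j i) / d t v j) atTop
      (𝓝 (if i = v then -1 else 1)) := by
    intro i
    split_ifs with hi
    · rw [hi]
      refine tendsto_const_nhds.congr' <|
        ((hinf j hj).eventually_gt_atTop 0).mono fun t ht => ?_
      dsimp only
      rw [hzero, hsymm t j v, zero_sub, neg_div, div_self ht.ne']
    · exact tendsto_dist_sub_dist_div_dist hfix hinf hratio hi hj
  rw [← sum_mul_ite_eq_sub]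
  simp only [hsymm _ j v, sum_div, mul_div_assoc]
  exact tendsto_finsetSum _ fun i _ => (hterm i).const_mul (η i)

end MovingVertex

theorem l1cent_tendsto_at_infinity_general {n : ℕ} (hn : 2 ≤ n)
    (dseq : ℕ → Fin n → Fin n → ℝ) (v1 : Fin n)
    (hsymm : ∀ t i j, dseq t i j = dseq t j i)
    (hzero : ∀ t i, dseq t i i = 0)
    (hfix : ∀ t i j, i ≠ v1 → j ≠ v1 → dseq t i j = dseq 0 i j)
    (hinf : ∀ w, w ≠ v1 → Tendsto (fun t => dseq t v1 w) atTop atTop)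
    (hratio : ∀ w w', w ≠ v1 → w' ≠ v1 →
      Tendsto (fun t => dseq t v1 w / dseq t v1 w') atTop (𝓝 1))
    (η : Fin n → ℝ) (hsum : 0 < ∑ j, η j) :
    Tendsto (fun t => L1Cent (dseq t) η v1) atTop
      (𝓝 (min (2 * η v1 / ∑ j, η j) 1)) := by
  have : Nontrivial (Fin n) := Fin.nontrivial_iff_two_le.mpr hn
  obtain ⟨w, hw⟩ := exists_ne v1
  have hne : (univ.erase v1).Nonempty := ⟨w, mem_erase.mpr ⟨hw, mem_univ w⟩⟩
  set S := ∑ j, η j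
  have hlim : ∀ j ∈ univ.erase v1, Tendsto
      (fun t => max 0 ((∑ i, η i * (dseq t v1 i - dseq t j i)) / (S * dseq t j v1))) atTop
      (𝓝 (max 0 (1 - 2 * η v1 / S))) := by
    intro j hj
    have h := (tendsto_weighted_dist_sub_dist_div_dist hsymm hzero hfix hinf hratio η
      (ne_of_mem_erase hj)).div_const S
    rw [sub_div, div_self hsum.ne'] at h
    simp only [div_div, mul_comm _ S] at h
    exact tendsto_const_nhds.max h
  simp only [L1Cent_eq_sup' _ _ _ hne, ← one_sub_max_zero_one_sub]
  simpa only [sup'_const] using (Tendsto.finset_sup'_nhds_apply hne hlim).const_sub 1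

/-- Minimum at infinity: as vertex `v₁` is moved to infinity (its distances to all
other vertices tend to `∞` with ratios tending to `1`, while the distances among the
other vertices stay fixed), its L1 centrality tends to `min {2η₁/η_·, 1}`. -/
theorem l1cent_tendsto_at_infinity {n : ℕ} (hn : 2 ≤ n)
    (dseq : ℕ → Fin n → Fin n → ℝ) (v1 : Fin n)
    (hsymm : ∀ t i j, dseq t i j = dseq t j i)
    (hzero : ∀ t i, dseq t i i = 0)
    (hpos : ∀ t i j, i ≠ j → 0 < dseq t i j)
    (htri : ∀ t i j l, dseq t i l ≤ dseq t i j + dseq t j l)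
    (hfix : ∀ t i j, i ≠ v1 → j ≠ v1 → dseq t i j = dseq 0 i j)
    (hinf : ∀ w, w ≠ v1 → Tendsto (fun t => dseq t v1 w) atTop atTop)
    (hratio : ∀ w w', w ≠ v1 → w' ≠ v1 →
      Tendsto (fun t => dseq t v1 w / dseq t v1 w') atTop (𝓝 1))
    (η : Fin n → ℝ) (hη : ∀ i, 0 ≤ η i) (hsum : 0 < ∑ j, η j) :
    Tendsto (fun t => L1Cent (dseq t) η v1) atTop
      (𝓝 (min (2 * η v1 / ∑ j, η j) 1)) :=
  l1cent_tendsto_at_infinity_general hn dseq v1 hsymm hzero hfix hinf hratio η hsum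
end

section
/- Symmetrization makes a median: if the multiplicity of vertex v_i is replaced by η_· + η_i (with other multiplicities unchanged), then v_i is a graph median of the resulting weighted graph; moreover, if η_i > 0, then v_i is the unique graph median. -/
open Finset

/-!
Write `F_μ(v) = ∑ⱼ μⱼ d(v, vⱼ)`. The triangle inequality gives `μⱼ (d(v, vⱼ) - d(vᵢ, vⱼ)) ≥ -μⱼ d(v, vᵢ)`
for every `j`, while the term `j = i` equals `+μᵢ d(v, vᵢ)`; summing,
`F_μ(v) - F_μ(vᵢ) ≥ (2μᵢ - μ_·) d(v, vᵢ)`. Adding the weight `μ_·` at `vᵢ` adds `μ_· d(v, vᵢ)` to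
`F(v) - F(vᵢ)`, so for the symmetrized weights `F(v) - F(vᵢ) ≥ 2μᵢ d(v, vᵢ) ≥ 0`, strictly for
`v ≠ vᵢ` when `μᵢ > 0`.
-/

section TotalDist

variable {ι : Type*} [Fintype ι] (d : ι → ι → ℝ)

def totalDist (μ : ι → ℝ) (v : ι) : ℝ := ∑ j, μ j * d v j

theorem totalDist_update_add_self [DecidableEq ι] (μ : ι → ℝ) (i : ι) (c : ℝ) (v : ι) :
    totalDist d (Function.update μ i (c + μ i)) v = totalDist d μ v + c * d v i := by
  have hupdate : Function.update μ i (c + μ i) = μ + Pi.single i c := by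
    ext j
    rcases eq_or_ne j i with rfl | hj
    · simp [add_comm]
    · simp [hj]
  simp only [totalDist, hupdate, Pi.add_apply, add_mul, sum_add_distrib, Pi.single_apply,
    ite_mul, zero_mul, sum_ite_eq', mem_univ, if_true]

variable {d}

theorem two_mul_mul_le_totalDist_sub (hsymm : ∀ i j, d i j = d j i) (hzero : ∀ i, d i i = 0)
    (htri : ∀ i j l, d i l ≤ d i j + d j l) {μ : ι → ℝ} (hμ : ∀ j, 0 ≤ μ j) (i v : ι) :
    2 * μ i * d v i ≤ totalDist d μ v - totalDist d μ i + (∑ j, μ j) * d v i := by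
  set gap : ι → ℝ := fun j => μ j * d v j - μ j * (d i j - d v i)
  have hgap_nonneg : ∀ j, 0 ≤ gap j := fun j => by
    have : d i j - d v i ≤ d v j := by linarith [htri i v j, hsymm i v]
    simpa [gap, sub_nonneg] using mul_le_mul_of_nonneg_left this (hμ j)
  have hgap_i : gap i = 2 * μ i * d v i := by
    simp only [gap, hzero, hsymm v i]
    ring
  have hgap_sum : ∑ j, gap j = totalDist d μ v - totalDist d μ i + (∑ j, μ j) * d v i := by
    simp only [gap, totalDist, mul_sub, sum_sub_distrib, sum_mul]
    ring
  rw [← hgap_i, ← hgap_sum]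
  exact single_le_sum (fun j _ => hgap_nonneg j) (mem_univ i)

theorem two_mul_mul_le_totalDist_update_sub [DecidableEq ι] (hsymm : ∀ i j, d i j = d j i)
    (hzero : ∀ i, d i i = 0) (htri : ∀ i j l, d i l ≤ d i j + d j l) {μ : ι → ℝ}
    (hμ : ∀ j, 0 ≤ μ j) (i v : ι) :
    2 * μ i * d v i ≤ totalDist d (Function.update μ i ((∑ j, μ j) + μ i)) v -
      totalDist d (Function.update μ i ((∑ j, μ j) + μ i)) i := by
  rw [totalDist_update_add_self, totalDist_update_add_self, hzero]
  linarith [two_mul_mul_le_totalDist_sub hsymm hzero htri hμ i v]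

end TotalDist

theorem symmetrization_median_general {n : ℕ} (d : Fin n → Fin n → ℝ)
    (hsymm : ∀ i j, d i j = d j i)
    (hzero : ∀ i, d i i = 0)
    (hpos : ∀ i j, i ≠ j → 0 < d i j)
    (htri : ∀ i j l, d i l ≤ d i j + d j l)
    (η : Fin n → ℝ) (hη : ∀ j, 0 ≤ η j)
    (i : Fin n) :
    (∀ v, ∑ j, Function.update η i ((∑ j, η j) + η i) j * d i j ≤
        ∑ j, Function.update η i ((∑ j, η j) + η i) j * d v j) ∧
      (0 < η i → ∀ v, (∀ w, ∑ j, Function.update η i ((∑ j, η j) + η i) j * d v j ≤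
        ∑ j, Function.update η i ((∑ j, η j) + η i) j * d w j) → v = i) := by
  have hgain := two_mul_mul_le_totalDist_update_sub hsymm hzero htri hη i
  refine ⟨fun v => ?_, fun hi v hv => ?_⟩
  · have hdist : 0 ≤ d v i := by linarith [htri v i v, hzero v, hsymm i v]
    show totalDist d _ i ≤ totalDist d _ v
    linarith [hgain v, mul_nonneg (mul_nonneg zero_le_two (hη i)) hdist]
  · by_contra hvi
    have : 0 < 2 * η i * d v i := by have := hpos v i hvi; positivity
    linarith [hgain v, show totalDist d _ v ≤ totalDist d _ i from hv i]

/-- Symmetrization makes a median: replacing the multiplicity of `v_i` by `η_· + η_i`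
makes `v_i` a graph median, and the unique one when `η_i > 0`. -/
theorem symmetrization_median {n : ℕ} (d : Fin n → Fin n → ℝ)
    (hsymm : ∀ i j, d i j = d j i)
    (hzero : ∀ i, d i i = 0)
    (hpos : ∀ i j, i ≠ j → 0 < d i j)
    (htri : ∀ i j l, d i l ≤ d i j + d j l)
    (η : Fin n → ℝ) (hη : ∀ j, 0 ≤ η j) (hsum : 0 < ∑ j, η j)
    (i : Fin n) :
    (∀ v, ∑ j, Function.update η i ((∑ j, η j) + η i) j * d i j ≤
        ∑ j, Function.update η i ((∑ j, η j) + η i) j * d v j) ∧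
      (0 < η i → ∀ v, (∀ w, ∑ j, Function.update η i ((∑ j, η j) + η i) j * d v j ≤
        ∑ j, Function.update η i ((∑ j, η j) + η i) j * d w j) → v = i) :=
  symmetrization_median_general d hsymm hzero hpos htri η hη i
end

section
/- With equal multiplicities η_i = 1, the supremum over y ∈ ℝ^d \ {x₁} of {Σ_{i=1}^n (‖x₁ - X_i‖ - ‖y - X_i‖)/(n ‖y - x₁‖)}^+ equals (‖ē_n(x₁)‖ - 1/n)^+, where ē_n(x₁) = (1/n) Σ_{i=2}^n (X_i - x₁)/‖X_i - x₁‖. -/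
/-!
For a data point `z ≠ x` with unit direction `u = (z - x)/‖z - x‖`, convexity of `‖· - z‖` gives
`‖x - z‖ - ‖y - z‖ ≤ ⟪y - x, u⟫`; summing and applying Cauchy–Schwarz bounds the normalised
decrease by `(‖Σ uᵢ‖ - 1)/n`. The bound is sharp: `⟪v, Σ uᵢ⟫` is the one-sided directional
derivative of the decrease at `x` in the direction `v`, so moving from `x` along a unit vector
`v` with `⟪v, Σ uᵢ⟫ = ‖Σ uᵢ‖` approaches it. Taking positive parts commutes with the supremum.
-/

open Finset Filter Topology
open scoped RealInnerProductSpace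

theorem csSup_image_max_zero {α : Type*} {s : Set α} {f : α → ℝ} {L : ℝ} (hs : s.Nonempty)
    (hf : IsLUB (f '' s) L) : sSup ((fun y => max 0 (f y)) '' s) = max 0 L := by
  rw [← Set.image_image (max 0) f, ← hf.csSup_eq (hs.image f)]
  exact ((monotone_const.max monotone_id).map_csSup_of_continuousAt
    (continuous_const.max continuous_id).continuousAt (hs.image f) hf.bddAbove).symm

section

variable {E ι : Type*} [NormedAddCommGroup E] [InnerProductSpace ℝ E] [Fintype ι]

theorem norm_sub_sub_norm_sub_le_inner (x y z : E) :
    ‖x - z‖ - ‖y - z‖ ≤ ⟪y - x, ‖z - x‖⁻¹ • (z - x)⟫ := by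
  rcases eq_or_ne z x with rfl | hz
  · simp -- the right side is `0`, as `‖0‖⁻¹ = 0`
  have hr : 0 < ‖z - x‖ := norm_pos_iff.mpr (sub_ne_zero.mpr hz)
  rw [real_inner_smul_right, le_inv_mul_iff₀ hr, norm_sub_rev x z]
  have hsplit : ⟪y - x, z - x⟫ = ⟪y - z, z - x⟫ + ‖z - x‖ ^ 2 := by
    rw [← sub_add_sub_cancel y z x, inner_add_left, real_inner_self_eq_norm_sq]
  have hcs : -(‖y - z‖ * ‖z - x‖) ≤ ⟪y - z, z - x⟫ :=
    neg_le_of_abs_le (abs_real_inner_le_norm _ _)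
  nlinarith

theorem hasDerivAt_norm_add_smul {a : E} (v : E) (ha : a ≠ 0) :
    HasDerivAt (fun t : ℝ => ‖a + t • v‖) (⟪a, v⟫ / ‖a‖) 0 := by
  have hline : HasDerivAt (fun t : ℝ => a + t • v) v 0 := by
    simpa using ((hasDerivAt_id (0 : ℝ)).smul_const v).const_add a
  have := hline.norm_sq.sqrt (by simpa using ha)
  simp only [zero_smul, add_zero, Real.sqrt_sq (norm_nonneg _)] at this
  convert this using 1
  field_simp [norm_ne_zero_iff.mpr ha]

theorem tendsto_norm_sub_sub_norm_add_smul_sub_div {x z : E} (v : E) (hz : z ≠ x) :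
    Tendsto (fun t : ℝ => (‖x - z‖ - ‖x + t • v - z‖) / t) (𝓝[≠] 0)
      (𝓝 ⟪v, ‖z - x‖⁻¹ • (z - x)⟫) := by
  have hslope := (hasDerivAt_norm_add_smul v (sub_ne_zero.mpr hz.symm)).tendsto_slope_zero.neg
  convert hslope using 2 with t
  · rw [smul_eq_mul, zero_add, zero_smul, add_zero, add_sub_right_comm]
    ring
  · rw [real_inner_smul_right, real_inner_comm, ← neg_sub x z, inner_neg_left, norm_neg]
    ring

theorem exists_norm_eq_one_inner_eq_norm [Nontrivial E] (e : E) :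
    ∃ v : E, ‖v‖ = 1 ∧ ⟪v, e⟫ = ‖e‖ := by
  rcases eq_or_ne e 0 with rfl | he
  · simpa using exists_norm_eq E zero_le_one
  refine ⟨‖e‖⁻¹ • e, norm_smul_inv_norm he, ?_⟩
  rw [real_inner_smul_left, real_inner_self_eq_norm_sq]
  field_simp [norm_ne_zero_iff.mpr he]

theorem sum_norm_sub_sub_norm_sub_le (x y : E) (Y : ι → E) :
    ∑ i, (‖x - Y i‖ - ‖y - Y i‖) ≤ ‖y - x‖ * ‖∑ i, ‖Y i - x‖⁻¹ • (Y i - x)‖ :=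
  calc ∑ i, (‖x - Y i‖ - ‖y - Y i‖) ≤ ∑ i, ⟪y - x, ‖Y i - x‖⁻¹ • (Y i - x)⟫ :=
        sum_le_sum fun i _ => norm_sub_sub_norm_sub_le_inner x y (Y i)
    _ = ⟪y - x, ∑ i, ‖Y i - x‖⁻¹ • (Y i - x)⟫ := (inner_sum _ _ _).symm
    _ ≤ _ := real_inner_le_norm _ _

theorem tendsto_sum_norm_sub_sub_norm_add_smul_sub_div {x : E} {Y : ι → E} (hY : ∀ i, Y i ≠ x)
    (v : E) :
    Tendsto (fun t : ℝ => (∑ i, (‖x - Y i‖ - ‖x + t • v - Y i‖)) / t) (𝓝[≠] 0)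
      (𝓝 ⟪v, ∑ i, ‖Y i - x‖⁻¹ • (Y i - x)⟫) := by
  simp_rw [sum_div, inner_sum]
  exact tendsto_finsetSum _ fun i _ => tendsto_norm_sub_sub_norm_add_smul_sub_div v (hY i)

/-- With `n` the number of data points (including `x`), this is the normalised decrease
`Σᵢ (‖x - Xᵢ‖ - ‖y - Xᵢ‖) / (n ‖y - x‖)` of the sum of distances from `x` to `y`;
the term `-‖y - x‖` comes from the data point `x` itself. -/
noncomputable def descentRatio (x : E) (Y : ι → E) (n : ℝ) (y : E) : ℝ :=
  (-‖y - x‖ + ∑ i, (‖x - Y i‖ - ‖y - Y i‖)) / (n * ‖y - x‖)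

theorem descentRatio_le (x : E) (Y : ι → E) {n : ℝ} (hn : 0 < n) {y : E} (hy : y ≠ x) :
    descentRatio x Y n y ≤ (‖∑ i, ‖Y i - x‖⁻¹ • (Y i - x)‖ - 1) / n := by
  have hr : 0 < ‖y - x‖ := norm_pos_iff.mpr (sub_ne_zero.mpr hy)
  rw [descentRatio, div_le_div_iff₀ (by positivity) hn]
  nlinarith [sum_norm_sub_sub_norm_sub_le x y Y]

theorem tendsto_descentRatio_add_smul {x : E} {Y : ι → E} (hY : ∀ i, Y i ≠ x) (n : ℝ) {v : E}
    (hv : ‖v‖ = 1) :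
    Tendsto (fun t : ℝ => descentRatio x Y n (x + t • v)) (𝓝[>] 0)
      (𝓝 ((⟪v, ∑ i, ‖Y i - x‖⁻¹ • (Y i - x)⟫ - 1) / n)) := by
  have hlim := (((tendsto_sum_norm_sub_sub_norm_add_smul_sub_div hY v).mono_left
    (nhdsGT_le_nhdsNE 0)).sub_const 1).div_const n
  refine hlim.congr' ?_
  filter_upwards [self_mem_nhdsWithin] with t (ht : 0 < t)
  have hnorm : ‖x + t • v - x‖ = t := by
    rw [add_sub_cancel_left, norm_smul, hv, mul_one, Real.norm_of_nonneg ht.le]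
  rw [descentRatio, hnorm]
  field_simp
  ring

theorem isLUB_descentRatio [Nontrivial E] {x : E} {Y : ι → E} (hY : ∀ i, Y i ≠ x) {n : ℝ}
    (hn : 0 < n) :
    IsLUB (descentRatio x Y n '' {y | y ≠ x}) ((‖∑ i, ‖Y i - x‖⁻¹ • (Y i - x)‖ - 1) / n) := by
  refine ⟨?_, fun b hb => ?_⟩
  · rintro _ ⟨y, hy, rfl⟩
    exact descentRatio_le x Y hn hy
  · obtain ⟨v, hv, hve⟩ := exists_norm_eq_one_inner_eq_norm (∑ i, ‖Y i - x‖⁻¹ • (Y i - x))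
    have hv0 : v ≠ 0 := by rintro rfl; simp at hv
    rw [← hve]
    refine le_of_tendsto (tendsto_descentRatio_add_smul hY n hv) ?_
    filter_upwards [self_mem_nhdsWithin] with t (ht : 0 < t)
    exact hb ⟨x + t • v, by simpa [ht.ne'] using hv0, rfl⟩

end

/-- Vardi–Zhang identity: with equal multiplicities, the supremum over
`y ∈ ℝ^d \ {x₁}` of `{Σᵢ₌₁ⁿ (‖x₁ - Xᵢ‖ - ‖y - Xᵢ‖)/(n ‖y - x₁‖)}⁺` equals
`(‖ē_n(x₁)‖ - 1/n)⁺`, where `ē_n(x₁) = (1/n) Σᵢ₌₂ⁿ (Xᵢ - x₁)/‖Xᵢ - x₁‖`.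
Here the data points are `x₁` together with `Y 0, …, Y (m-1)` (so `n = m + 1`),
and the `i = 1` term of the numerator sum is `‖x₁ - x₁‖ - ‖y - x₁‖ = -‖y - x₁‖`. -/
theorem vardi_zhang_sup_identity {d m : ℕ} (hd : 0 < d)
    (x₁ : EuclideanSpace ℝ (Fin d)) (Y : Fin m → EuclideanSpace ℝ (Fin d))
    (hY : ∀ i, Y i ≠ x₁) :
    sSup ((fun y => max 0 ((-‖y - x₁‖ + ∑ i, (‖x₁ - Y i‖ - ‖y - Y i‖)) /
          (((m : ℝ) + 1) * ‖y - x₁‖))) '' {y | y ≠ x₁}) =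
      max 0 (‖((m : ℝ) + 1)⁻¹ • ∑ i, ‖Y i - x₁‖⁻¹ • (Y i - x₁)‖ - 1 / ((m : ℝ) + 1)) := by
  have : Nonempty (Fin d) := ⟨⟨0, hd⟩⟩
  have hn : (0 : ℝ) < m + 1 := by positivity
  obtain ⟨y, hy⟩ := exists_ne x₁
  refine (csSup_image_max_zero ⟨y, hy⟩ (isLUB_descentRatio hY hn)).trans ?_
  rw [norm_smul, Real.norm_of_nonneg (inv_nonneg.mpr hn.le)]
  field_simp
end
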